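/- arXiv:2504.09708 — 2 statements merged into one kernel-verified Lean document; each statement's English description precedes it below -/
import Mathlib

section
/- Let f(X) = ‖𝒜(XXᵀ − M★)‖² where 𝒜 satisfies RIP with constant δ on rank-2r matrices. For any X, D ∈ ℝ^{n×r}, the difference f(X+D) − f(X) − ⟨∇f(X), D⟩ is bounded above by (1+δ)(2‖XXᵀ−M★‖_F‖D‖_F² + 4‖XDᵀ‖_F² + 4‖XDᵀ‖_F‖D‖_F² + ‖D‖_F⁴). -/
open Matrix BigOperators RealInnerProductSpace

/-- Frobenius norm of a real matrix. -/
noncomputable def frob {n m : Type*} [Fintype n] [Fintype m] (A : Matrix n m ℝ) : ℝ :=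
  Real.sqrt (∑ i, ∑ j, (A i j) ^ 2)

attribute [local instance] Matrix.frobeniusNormedAddCommGroup

lemma frob_eq_norm {n m : Type*} [Fintype n] [Fintype m] (A : Matrix n m ℝ) :
    frob A = ‖A‖ := by
  rw [frob, Matrix.frobenius_norm_def, Real.sqrt_eq_rpow]
  congr 1
  refine Finset.sum_congr rfl fun i _ => Finset.sum_congr rfl fun j _ => ?_
  rw [Real.rpow_two, Real.norm_eq_abs, sq_abs]

lemma frob_nonneg {n m : Type*} [Fintype n] [Fintype m] (A : Matrix n m ℝ) :
    0 ≤ frob A := Real.sqrt_nonneg _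

lemma matrix_rank_add_le {p q : ℕ} (A B : Matrix (Fin p) (Fin q) ℝ) :
    (A + B).rank ≤ A.rank + B.rank := by
  rw [Matrix.rank, Matrix.rank, Matrix.rank, Matrix.mulVecLin_add]
  have h : LinearMap.range (A.mulVecLin + B.mulVecLin) ≤
      LinearMap.range A.mulVecLin ⊔ LinearMap.range B.mulVecLin := by
    rintro x ⟨y, rfl⟩
    exact Submodule.add_mem_sup ⟨y, rfl⟩ ⟨y, rfl⟩
  exact (Submodule.finrank_mono h).trans
    (Submodule.finrank_add_le_finrank_add_finrank _ _)

lemma matrix_rank_neg {p q : ℕ} (A : Matrix (Fin p) (Fin q) ℝ) : (-A).rank = A.rank := by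
  have h : (-A).mulVecLin = -A.mulVecLin := by
    ext v
    simp [Matrix.mulVecLin_apply, Matrix.neg_mulVec]
  rw [Matrix.rank, Matrix.rank, h, LinearMap.range_neg]

/-- Taylor-like expansion bound for `f(X) = ‖𝒜(XXᵀ − M★)‖²` under RIP:
`f(X+D) − f(X) − ⟨∇f(X), D⟩` is bounded above by
`(1+δ)(2‖XXᵀ−M★‖_F‖D‖_F² + 4‖XDᵀ‖_F² + 4‖XDᵀ‖_F‖D‖_F² + ‖D‖_F⁴)`,
where `⟨∇f(X), D⟩ = 2⟨𝒜(XDᵀ+DXᵀ), 𝒜(XXᵀ−M★)⟩`. -/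
theorem stmt3 {n m r : ℕ} (δ : ℝ) (hδ0 : 0 ≤ δ) (hδ1 : δ < 1)
    (𝒜 : Matrix (Fin n) (Fin n) ℝ →ₗ[ℝ] EuclideanSpace ℝ (Fin m))
    (hRIP : ∀ M : Matrix (Fin n) (Fin n) ℝ, M.rank ≤ 2 * r →
      (1 - δ) * frob M ^ 2 ≤ ‖𝒜 M‖ ^ 2 ∧ ‖𝒜 M‖ ^ 2 ≤ (1 + δ) * frob M ^ 2)
    (M : Matrix (Fin n) (Fin n) ℝ) (hMsym : Mᴴ = M) (hMr : M.rank ≤ r)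
    (X D : Matrix (Fin n) (Fin r) ℝ) :
    ‖𝒜 ((X + D) * (X + D)ᴴ - M)‖ ^ 2 - ‖𝒜 (X * Xᴴ - M)‖ ^ 2
        - 2 * ⟪𝒜 (X * Dᴴ + D * Xᴴ), 𝒜 (X * Xᴴ - M)⟫
      ≤ (1 + δ) * (2 * frob (X * Xᴴ - M) * frob D ^ 2 + 4 * frob (X * Dᴴ) ^ 2
          + 4 * frob (X * Dᴴ) * frob D ^ 2 + frob D ^ 4) := by
  set E := X * Xᴴ - M with hE
  set B := X * Dᴴ + D * Xᴴ with hB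
  set C := D * Dᴴ with hC
  -- algebraic expansion
  have hexp : (X + D) * (X + D)ᴴ - M = E + (B + C) := by
    simp only [hE, hB, hC, conjTranspose_add, Matrix.add_mul, Matrix.mul_add]
    abel
  -- rank bounds
  have hrX : X.rank ≤ r := by
    simpa using X.rank_le_card_width
  have hrD : D.rank ≤ r := by
    simpa using D.rank_le_card_width
  have hrankE : E.rank ≤ 2 * r := by
    have h1 : E = X * Xᴴ + (-M) := by rw [hE]; abel
    rw [h1]
    calc (X * Xᴴ + (-M)).rank ≤ (X * Xᴴ).rank + (-M).rank := matrix_rank_add_le _ _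
      _ ≤ r + r := by
          rw [matrix_rank_neg]
          exact add_le_add ((Matrix.rank_mul_le_left _ _).trans hrX) hMr
      _ = 2 * r := by ring
  have hrankC : C.rank ≤ 2 * r := by
    calc C.rank ≤ D.rank := Matrix.rank_mul_le_left _ _
      _ ≤ r := hrD
      _ ≤ 2 * r := by omega
  have hrankBC : (B + C).rank ≤ 2 * r := by
    have h1 : B + C = X * Dᴴ + D * (X + D)ᴴ := by
      rw [hB, hC, conjTranspose_add, Matrix.mul_add]; abel
    rw [h1]
    calc (X * Dᴴ + D * (X + D)ᴴ).rank ≤ (X * Dᴴ).rank + (D * (X + D)ᴴ).rank :=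
          matrix_rank_add_le _ _
      _ ≤ r + r := add_le_add ((Matrix.rank_mul_le_left _ _).trans hrX)
          ((Matrix.rank_mul_le_left _ _).trans hrD)
      _ = 2 * r := by ring
  -- frobenius norm bounds
  have hfBC : frob (B + C) ≤ 2 * frob (X * Dᴴ) + frob D ^ 2 := by
    simp only [frob_eq_norm]
    have h1 : ‖D * Xᴴ‖ = ‖X * Dᴴ‖ := by
      rw [show D * Xᴴ = (X * Dᴴ)ᴴ by simp [conjTranspose_mul], Matrix.frobenius_norm_conjTranspose]
    have h2 : ‖D * Dᴴ‖ ≤ ‖D‖ * ‖Dᴴ‖ := Matrix.frobenius_norm_mul D Dᴴ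
    rw [Matrix.frobenius_norm_conjTranspose] at h2
    calc ‖B + C‖ ≤ ‖B‖ + ‖C‖ := norm_add_le _ _
      _ ≤ (‖X * Dᴴ‖ + ‖D * Xᴴ‖) + ‖D * Dᴴ‖ := add_le_add_left (norm_add_le _ _) _
      _ ≤ 2 * ‖X * Dᴴ‖ + ‖D‖ ^ 2 := by rw [h1]; nlinarith [h2]
  have hfC : frob C ≤ frob D ^ 2 := by
    simp only [frob_eq_norm]
    have h2 : ‖D * Dᴴ‖ ≤ ‖D‖ * ‖Dᴴ‖ := Matrix.frobenius_norm_mul D Dᴴ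
    rw [Matrix.frobenius_norm_conjTranspose] at h2
    nlinarith [h2]
  -- RIP bounds
  have hRIP_BC := (hRIP _ hrankBC).2
  have hRIP_E := (hRIP _ hrankE).2
  have hRIP_C := (hRIP _ hrankC).2
  -- inner product expansion
  have hnorm : ‖𝒜 ((X + D) * (X + D)ᴴ - M)‖ ^ 2
      = ‖𝒜 E‖ ^ 2 + 2 * (⟪𝒜 E, 𝒜 B⟫ + ⟪𝒜 E, 𝒜 C⟫) + ‖𝒜 (B + C)‖ ^ 2 := by
    rw [hexp, map_add, norm_add_sq_real, map_add, inner_add_right]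
  have hcomm : ⟪𝒜 B, 𝒜 E⟫ = ⟪𝒜 E, 𝒜 B⟫ := real_inner_comm _ _
  -- key bound on cross term
  have hδ' : (0:ℝ) ≤ 1 + δ := by linarith
  have hsq : ∀ (Z : Matrix (Fin n) (Fin n) ℝ), ‖𝒜 Z‖ ^ 2 ≤ (1 + δ) * frob Z ^ 2 →
      ‖𝒜 Z‖ ≤ Real.sqrt (1 + δ) * frob Z := by
    intro Z hZ
    have h1 : ‖𝒜 Z‖ = Real.sqrt (‖𝒜 Z‖ ^ 2) := (Real.sqrt_sq (norm_nonneg _)).symm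
    rw [h1]
    calc Real.sqrt (‖𝒜 Z‖ ^ 2) ≤ Real.sqrt ((1 + δ) * frob Z ^ 2) := Real.sqrt_le_sqrt hZ
      _ = Real.sqrt (1 + δ) * frob Z := by
          rw [Real.sqrt_mul hδ', Real.sqrt_sq (frob_nonneg _)]
  have hEn := hsq E hRIP_E
  have hCn := hsq C hRIP_C
  have hcross : ⟪𝒜 E, 𝒜 C⟫ ≤ (1 + δ) * (frob E * frob D ^ 2) := by
    have h1 : ⟪𝒜 E, 𝒜 C⟫ ≤ ‖𝒜 E‖ * ‖𝒜 C‖ := real_inner_le_norm _ _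
    have h2 : ‖𝒜 E‖ * ‖𝒜 C‖ ≤ (Real.sqrt (1 + δ) * frob E) * (Real.sqrt (1 + δ) * frob C) :=
      mul_le_mul hEn hCn (norm_nonneg _) (mul_nonneg (Real.sqrt_nonneg _) (frob_nonneg _))
    have h3 : (Real.sqrt (1 + δ) * frob E) * (Real.sqrt (1 + δ) * frob C)
        = (1 + δ) * (frob E * frob C) := by
      have hs : Real.sqrt (1 + δ) * Real.sqrt (1 + δ) = 1 + δ := Real.mul_self_sqrt hδ'
      linear_combination (frob E * frob C) * hs
    have h4 : (1 + δ) * (frob E * frob C) ≤ (1 + δ) * (frob E * frob D ^ 2) :=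
      mul_le_mul_of_nonneg_left (mul_le_mul_of_nonneg_left hfC (frob_nonneg _)) hδ'
    linarith
  have hmain : ‖𝒜 (B + C)‖ ^ 2 ≤ (1 + δ) * (2 * frob (X * Dᴴ) + frob D ^ 2) ^ 2 := by
    calc ‖𝒜 (B + C)‖ ^ 2 ≤ (1 + δ) * frob (B + C) ^ 2 := hRIP_BC
      _ ≤ (1 + δ) * (2 * frob (X * Dᴴ) + frob D ^ 2) ^ 2 :=
          mul_le_mul_of_nonneg_left (pow_le_pow_left₀ (frob_nonneg _) hfBC 2) hδ'
  rw [hnorm, hcomm]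
  nlinarith [hmain, hcross, frob_nonneg (X * Dᴴ), frob_nonneg D]
end

section
/- Let f(X) = ‖𝒜(XXᵀ − M★)‖² with 𝒜 satisfying RIP with constant δ on rank-2r matrices, and let P = XᵀX + ηI with η ≥ 0. Then the dual P-norm of the gradient satisfies ‖∇f(X)‖_{P*}² ≤ 16(1+δ)f(X). -/
open Matrix BigOperators

/-- The positive semidefinite square root of a positive semidefinite matrix
(as defined in Mathlib of December 2024; removed since). -/
noncomputable def Matrix.PosSemidef.sqrt {n : Type*} [Fintype n] [DecidableEq n] {𝕜 : Type*}
    [RCLike 𝕜] [PartialOrder 𝕜] {A : Matrix n n 𝕜} (hA : A.PosSemidef) : Matrix n n 𝕜 :=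
  hA.1.eigenvectorUnitary.1 * diagonal ((↑) ∘ (√·) ∘ hA.1.eigenvalues) *
  (star hA.1.eigenvectorUnitary : Matrix n n 𝕜)

lemma psd_sqrt_herm {n : Type*} [Fintype n] [DecidableEq n] {A : Matrix n n ℝ}
    (hA : A.PosSemidef) : (hA.sqrt)ᴴ = hA.sqrt := by
  simp only [Matrix.PosSemidef.sqrt, Matrix.conjTranspose_mul, Unitary.coe_star,
    Matrix.star_eq_conjTranspose, Matrix.conjTranspose_conjTranspose,
    Matrix.diagonal_conjTranspose, star_trivial, Matrix.mul_assoc]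

lemma psd_sqrt_mul_self {n : Type*} [Fintype n] [DecidableEq n] {A : Matrix n n ℝ}
    (hA : A.PosSemidef) : hA.sqrt * hA.sqrt = A := by
  have hU : (star hA.1.eigenvectorUnitary : Matrix n n ℝ) * hA.1.eigenvectorUnitary.1 = 1 :=
    Unitary.star_mul_self_of_mem hA.1.eigenvectorUnitary.2
  have hD : diagonal ((RCLike.ofReal : ℝ → ℝ) ∘ (√·) ∘ hA.1.eigenvalues) * diagonal ((RCLike.ofReal : ℝ → ℝ) ∘ (√·) ∘ hA.1.eigenvalues)
      = diagonal (RCLike.ofReal ∘ hA.1.eigenvalues : n → ℝ) := by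
    rw [Matrix.diagonal_mul_diagonal]
    congr 1
    funext i
    simp [Real.mul_self_sqrt (hA.eigenvalues_nonneg i)]
  conv_rhs => rw [hA.1.spectral_theorem, Unitary.conjStarAlgAut_apply]
  unfold Matrix.PosSemidef.sqrt
  calc _ = hA.1.eigenvectorUnitary.1 * diagonal ((RCLike.ofReal : ℝ → ℝ) ∘ (√·) ∘ hA.1.eigenvalues) *
        ((star hA.1.eigenvectorUnitary : Matrix n n ℝ) * hA.1.eigenvectorUnitary.1) *
        diagonal ((RCLike.ofReal : ℝ → ℝ) ∘ (√·) ∘ hA.1.eigenvalues) * (star hA.1.eigenvectorUnitary : Matrix n n ℝ) := by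
          simp only [Matrix.mul_assoc]
    _ = _ := by rw [hU, Matrix.mul_one, Matrix.mul_assoc _ (diagonal _) (diagonal _), hD]

lemma frob_sq {n m : Type*} [Fintype n] [Fintype m] (A : Matrix n m ℝ) :
    frob A ^ 2 = ∑ i, ∑ j, (A i j) ^ 2 :=
  Real.sq_sqrt (by positivity)

lemma trace_mul_ct {n m : Type*} [Fintype n] [Fintype m] (B : Matrix n m ℝ) :
    Matrix.trace (B * Bᴴ) = ∑ i, ∑ j, (B i j) ^ 2 := by
  simp [Matrix.trace, Matrix.mul_apply, Matrix.diag, Matrix.conjTranspose_apply, sq]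

lemma trace_nonneg_of_psd {n : Type*} [Fintype n] [DecidableEq n] {B : Matrix n n ℝ}
    (hB : B.PosSemidef) : 0 ≤ B.trace :=
  hB.trace_nonneg

lemma frob_four_smul {n m : Type*} [Fintype n] [Fintype m] (C : Matrix n m ℝ) :
    frob ((4:ℝ) • C) ^ 2 = 16 * Matrix.trace (C * Cᴴ) := by
  rw [frob_sq, trace_mul_ct, Finset.mul_sum]
  refine Finset.sum_congr rfl fun i _ => ?_
  rw [Finset.mul_sum]
  refine Finset.sum_congr rfl fun j _ => ?_
  simp only [Matrix.smul_apply, smul_eq_mul]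
  ring

lemma main_aux {n m r : ℕ} (δ : ℝ) (h1δ : 0 ≤ 1 + δ)
    (A : Fin m → Matrix (Fin n) (Fin n) ℝ)
    (hRIP2 : ∀ Mat : Matrix (Fin n) (Fin n) ℝ, Mat.rank ≤ 2 * r →
      ∑ k, (Matrix.trace (A k * Mat)) ^ 2 ≤ (1 + δ) * frob Mat ^ 2)
    (c : Fin m → ℝ) (S : Matrix (Fin n) (Fin n) ℝ) (hS : S = ∑ k, c k • A k)
    (hSh : Sᴴ = S) (W : Matrix (Fin n) (Fin r) ℝ)
    (hW : ((1 : Matrix (Fin r) (Fin r) ℝ) - Wᴴ * W).PosSemidef) :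
    Matrix.trace ((S * W) * (S * W)ᴴ) ≤ (1 + δ) * ∑ k, (c k) ^ 2 := by
  have hf0 : (0:ℝ) ≤ ∑ k, (c k) ^ 2 := Finset.sum_nonneg fun k _ => sq_nonneg _
  set t : ℝ := Matrix.trace ((S * W) * (S * W)ᴴ) with ht
  have ht0 : 0 ≤ t := trace_nonneg_of_psd (Matrix.posSemidef_self_mul_conjTranspose _)
  -- the matrix Z
  have key1 : t = ∑ k, c k * Matrix.trace (A k * (S * W * Wᴴ)) := by
    have t1 : S * W * (S * W)ᴴ = (S * W * Wᴴ) * S := by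
      rw [Matrix.conjTranspose_mul, hSh]
      simp only [Matrix.mul_assoc]
    calc t = Matrix.trace ((S * W * Wᴴ) * S) := by rw [ht, t1]
      _ = Matrix.trace (S * (S * W * Wᴴ)) := Matrix.trace_mul_comm _ _
      _ = ∑ k, c k * Matrix.trace (A k * (S * W * Wᴴ)) := by
          rw [hS, Matrix.sum_mul, Matrix.trace_sum]
          exact Finset.sum_congr rfl fun k _ => by
            rw [Matrix.smul_mul, Matrix.trace_smul, smul_eq_mul]
  have key2 : Matrix.trace ((S * W * Wᴴ) * (S * W * Wᴴ)ᴴ) ≤ t := by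
    have eZ : (S * W * Wᴴ) * (S * W * Wᴴ)ᴴ = (S * W) * (Wᴴ * W) * (S * W)ᴴ := by
      simp only [Matrix.conjTranspose_mul, Matrix.conjTranspose_conjTranspose, hSh,
        Matrix.mul_assoc]
    have e3 : Matrix.trace ((S * W) * ((1 : Matrix (Fin r) (Fin r) ℝ) - Wᴴ * W) * (S * W)ᴴ)
        = t - Matrix.trace ((S * W * Wᴴ) * (S * W * Wᴴ)ᴴ) := by
      rw [Matrix.mul_sub, Matrix.sub_mul, Matrix.mul_one, Matrix.trace_sub, eZ, ht]
    have e4 : 0 ≤ Matrix.trace ((S * W) * ((1 : Matrix (Fin r) (Fin r) ℝ) - Wᴴ * W) * (S * W)ᴴ) :=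
      trace_nonneg_of_psd (hW.mul_mul_conjTranspose_same (S * W))
    linarith [e3 ▸ e4]
  have hZr : (S * W * Wᴴ).rank ≤ 2 * r := by
    have h1 := Matrix.rank_mul_le_left (S * W) Wᴴ
    have h2 := Matrix.rank_le_card_width (S * W)
    simp only [Fintype.card_fin] at h2
    omega
  have hRIPZ := hRIP2 _ hZr
  have hfrobZ : frob (S * W * Wᴴ) ^ 2 = Matrix.trace ((S * W * Wᴴ) * (S * W * Wᴴ)ᴴ) := by
    rw [frob_sq, trace_mul_ct]
  have cauchy : t ^ 2 ≤ (∑ k, (c k) ^ 2) * ∑ k, (Matrix.trace (A k * (S * W * Wᴴ))) ^ 2 := by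
    rw [key1]
    exact Finset.sum_mul_sq_le_sq_mul_sq _ _ _
  have chain : t ^ 2 ≤ (∑ k, (c k) ^ 2) * ((1 + δ) * t) := by
    calc t ^ 2 ≤ (∑ k, (c k) ^ 2) * ∑ k, (Matrix.trace (A k * (S * W * Wᴴ))) ^ 2 := cauchy
      _ ≤ (∑ k, (c k) ^ 2) * ((1 + δ) * frob (S * W * Wᴴ) ^ 2) :=
          mul_le_mul_of_nonneg_left hRIPZ hf0
      _ ≤ (∑ k, (c k) ^ 2) * ((1 + δ) * t) := by
          refine mul_le_mul_of_nonneg_left (mul_le_mul_of_nonneg_left ?_ h1δ) hf0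
          rw [hfrobZ]; exact key2
  rcases eq_or_lt_of_le ht0 with h | h
  · rw [← h]; positivity
  · nlinarith

/-- Bounded gradient: for `f(X) = ‖𝒜(XXᵀ − M★)‖²` with `𝒜` satisfying RIP with
constant `δ` on rank-`2r` matrices (measurement matrices `A k`, so that
`𝒜(M)_k = ⟨A k, M⟩ = tr(A k * M)`), the gradient `∇f(X) = 4(∑ₖ ⟨A k, E⟩ A k) X`
satisfies `‖∇f(X)‖_{P*}² = ‖∇f(X) P^{-1/2}‖_F² ≤ 16(1+δ) f(X)`,
where `P = XᵀX + ηI`, `η ≥ 0`. -/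
theorem stmt5 {n m r : ℕ} (δ η : ℝ) (hδ0 : 0 ≤ δ) (hδ1 : δ < 1) (hη : 0 ≤ η)
    (A : Fin m → Matrix (Fin n) (Fin n) ℝ) (hAsym : ∀ k, (A k)ᴴ = A k)
    (hRIP : ∀ M : Matrix (Fin n) (Fin n) ℝ, M.rank ≤ 2 * r →
      (1 - δ) * frob M ^ 2 ≤ ∑ k, (Matrix.trace (A k * M)) ^ 2 ∧
      ∑ k, (Matrix.trace (A k * M)) ^ 2 ≤ (1 + δ) * frob M ^ 2)
    (M : Matrix (Fin n) (Fin n) ℝ) (hMsym : Mᴴ = M) (hMr : M.rank ≤ r)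
    (X : Matrix (Fin n) (Fin r) ℝ)
    (hP : (Xᴴ * X + η • (1 : Matrix (Fin r) (Fin r) ℝ)).PosSemidef) :
    frob (((4 : ℝ) • ((∑ k, Matrix.trace (A k * (X * Xᴴ - M)) • A k) * X)) * (hP.sqrt)⁻¹) ^ 2
      ≤ 16 * (1 + δ) * ∑ k, (Matrix.trace (A k * (X * Xᴴ - M))) ^ 2 := by
  have h1δ : (0:ℝ) ≤ 1 + δ := by linarith
  have hsum0 : (0:ℝ) ≤ ∑ k, (Matrix.trace (A k * (X * Xᴴ - M))) ^ 2 :=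
    Finset.sum_nonneg fun k _ => sq_nonneg _
  by_cases hdet : IsUnit hP.sqrt.det
  · -- notation
    have hQl : hP.sqrt⁻¹ * hP.sqrt = 1 := Matrix.nonsing_inv_mul _ hdet
    have hQr : hP.sqrt * hP.sqrt⁻¹ = 1 := Matrix.mul_nonsing_inv _ hdet
    have hQh : (hP.sqrt⁻¹)ᴴ = hP.sqrt⁻¹ := by
      rw [Matrix.conjTranspose_nonsing_inv, psd_sqrt_herm hP]
    have hSh : (∑ k, Matrix.trace (A k * (X * Xᴴ - M)) • A k)ᴴ
        = ∑ k, Matrix.trace (A k * (X * Xᴴ - M)) • A k := by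
      rw [Matrix.conjTranspose_sum]
      refine Finset.sum_congr rfl fun k _ => ?_
      rw [Matrix.conjTranspose_smul, hAsym k, star_trivial]
    -- 1 - Wᴴ W = η • (Q * Q) is PSD
    have hC : (1 : Matrix (Fin r) (Fin r) ℝ) - (X * hP.sqrt⁻¹)ᴴ * (X * hP.sqrt⁻¹)
        = η • (hP.sqrt⁻¹ * hP.sqrt⁻¹) := by
      have h1 : hP.sqrt⁻¹ * (hP.sqrt * hP.sqrt) * hP.sqrt⁻¹ = 1 := by
        rw [← Matrix.mul_assoc, hQl, Matrix.one_mul, hQr]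
      rw [psd_sqrt_mul_self hP] at h1
      have h2 : (X * hP.sqrt⁻¹)ᴴ * (X * hP.sqrt⁻¹) = hP.sqrt⁻¹ * (Xᴴ * X) * hP.sqrt⁻¹ := by
        rw [Matrix.conjTranspose_mul, hQh]
        simp only [Matrix.mul_assoc]
      rw [Matrix.mul_add, Matrix.add_mul, Matrix.mul_smul, Matrix.mul_one,
        Matrix.smul_mul] at h1
      rw [h2]
      exact sub_eq_of_eq_add' h1.symm
    have hWpsd : ((1 : Matrix (Fin r) (Fin r) ℝ)
        - (X * hP.sqrt⁻¹)ᴴ * (X * hP.sqrt⁻¹)).PosSemidef := by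
      rw [hC]
      have : η • (hP.sqrt⁻¹ * hP.sqrt⁻¹)
          = (Real.sqrt η • hP.sqrt⁻¹)ᴴ * (Real.sqrt η • hP.sqrt⁻¹) := by
        rw [Matrix.conjTranspose_smul, star_trivial, hQh, Matrix.smul_mul, Matrix.mul_smul,
          smul_smul, Real.mul_self_sqrt hη]
      rw [this]
      exact Matrix.posSemidef_conjTranspose_mul_self _
    have key := main_aux δ h1δ A (fun Mat hMat => (hRIP Mat hMat).2)
      (fun k => Matrix.trace (A k * (X * Xᴴ - M)))
      (∑ k, Matrix.trace (A k * (X * Xᴴ - M)) • A k) rfl hSh (X * hP.sqrt⁻¹) hWpsd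
    have lhs : (((4 : ℝ) • ((∑ k, Matrix.trace (A k * (X * Xᴴ - M)) • A k) * X)) * (hP.sqrt)⁻¹)
        = (4 : ℝ) • ((∑ k, Matrix.trace (A k * (X * Xᴴ - M)) • A k) * (X * hP.sqrt⁻¹)) := by
      rw [Matrix.smul_mul, Matrix.mul_assoc]
    rw [lhs, frob_four_smul]
    calc 16 * Matrix.trace (((∑ k, Matrix.trace (A k * (X * Xᴴ - M)) • A k) * (X * hP.sqrt⁻¹)) *
            ((∑ k, Matrix.trace (A k * (X * Xᴴ - M)) • A k) * (X * hP.sqrt⁻¹))ᴴ)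
        ≤ 16 * ((1 + δ) * ∑ k, (Matrix.trace (A k * (X * Xᴴ - M))) ^ 2) := by linarith
      _ = 16 * (1 + δ) * ∑ k, (Matrix.trace (A k * (X * Xᴴ - M))) ^ 2 := by ring
  · rw [Matrix.nonsing_inv_apply_not_isUnit _ hdet, Matrix.mul_zero]
    have h0 : frob (0 : Matrix (Fin n) (Fin r) ℝ) = 0 := by simp [frob]
    rw [h0]
    norm_num
    exact mul_nonneg (by linarith) hsum0
end
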